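/- Let ℓ be odd and let G be an ℓ-regular graph with a perfect matching M. If each connected component of G minus the edges of M is isomorphic to the ((ℓ-1)/2)-th power of a cycle, then G admits an M-centered P_ℓ-decomposition. -/

import Mathlib

open SimpleGraph

/-- The `k`-th power of the cycle on `m` vertices. -/
def cyclePower (m k : ℕ) : SimpleGraph (ZMod m) where
  Adj x y := x ≠ y ∧ ∃ r : ℤ, r.natAbs ≤ k ∧ x - y = (r : ZMod m)
  symm := by
    constructor
    rintro x y ⟨hxy, r, hr, h⟩
    exact ⟨hxy.symm, -r, by simpa using hr, by rw [Int.cast_neg, ← h, neg_sub]⟩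
  loopless := by constructor; rintro x ⟨h, -⟩; exact h rfl

/-!
Write `k = (ℓ - 1) / 2` and `H = G - M`, which is `2k`-regular. In `C_m^k` (here `m > 2k`, or
`m = 0`, where `ZMod 0 = ℤ`), the zigzag `x, x + k, x + 1, x + k - 1, x + 2, …` of length `k`
uses each difference `k, k - 1, …, 1` once, so the zigzags rooted at all vertices partition the
edges, and two of them meet only if their roots are equal or adjacent. Transported to the
components of `H`, this gives every vertex `v` a path `Z v` of length `k` in `H`. For a matching
edge `uv`, the endpoints are distinct and not adjacent in `H`, so `Z u` reversed, then `uv`, then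
`Z v` is a path of length `2k + 1` with middle edge `uv`. Taking one such path per matching edge
covers every matching edge once, and every edge of `H` once, namely in the path through the
matching edge at the root of the unique zigzag containing it.
-/

lemma Sym2.eq_and_eq_of_eq_of_lt {α : Type*} [Preorder α] {a b c d : α} (h : s(a, b) = s(c, d))
    (hab : a < b) (hcd : c < d) : a = c ∧ b = d := by
  rcases Sym2.eq_iff.1 h with h | ⟨rfl, rfl⟩
  · exact h
  · exact absurd (hab.trans hcd) (lt_irrefl a)

lemma Function.Injective.sym2_mk_eq_iff {α β : Type*} {f : α → β} (hf : Function.Injective f)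
    {a b c d : α} : s(f a, f b) = s(f c, f d) ↔ s(a, b) = s(c, d) := by
  simpa only [Sym2.map_mk] using (Sym2.map.injective hf).eq_iff (a := s(a, b)) (b := s(c, d))

namespace SimpleGraph

variable {V W : Type*} {G : SimpleGraph V}

def Walk.ofFn (G : SimpleGraph V) : (n : ℕ) → (f : ℕ → V) →
    (∀ j < n, G.Adj (f j) (f (j + 1))) → G.Walk (f 0) (f n)
  | 0, _, _ => .nil
  | n + 1, f, h => .cons (h 0 n.succ_pos)
      (Walk.ofFn G n (fun j => f (j + 1)) fun j hj => h (j + 1) (by omega))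

namespace Walk

variable {n : ℕ} {f : ℕ → V} {h : ∀ j < n, G.Adj (f j) (f (j + 1))}

@[simp]
lemma length_ofFn : (Walk.ofFn G n f h).length = n := by
  induction n generalizing f with
  | zero => rfl
  | succ n ih => simp [Walk.ofFn, ih]

lemma edges_ofFn : (Walk.ofFn G n f h).edges = (List.range n).map fun j => s(f j, f (j + 1)) := by
  induction n generalizing f with
  | zero => rfl
  | succ n ih => simp [Walk.ofFn, ih, List.range_succ_eq_map, Function.comp_def]

lemma support_ofFn : (Walk.ofFn G n f h).support = (List.range (n + 1)).map f := by
  induction n generalizing f with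
  | zero => rfl
  | succ n ih => simp [Walk.ofFn, ih, List.range_succ_eq_map (n := n + 1), Function.comp_def]

lemma mem_edges_ofFn {e : Sym2 V} :
    e ∈ (Walk.ofFn G n f h).edges ↔ ∃ j < n, e = s(f j, f (j + 1)) := by
  simp [edges_ofFn, eq_comm]

lemma getElem?_edges_ofFn {j : ℕ} (hj : j < n) :
    (Walk.ofFn G n f h).edges[j]? = some s(f j, f (j + 1)) := by
  simp [edges_ofFn, hj]

lemma isPath_ofFn (hf : Set.InjOn f (Set.Iic n)) : (Walk.ofFn G n f h).IsPath := by
  refine IsPath.mk' ?_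
  rw [support_ofFn]
  exact List.nodup_range.map_on fun i hi j hj => hf (by simpa [Nat.lt_succ_iff] using hi)
    (by simpa [Nat.lt_succ_iff] using hj)

end Walk

def IsCenteredPathDecomposition (M : G.Subgraph) (ℓ : ℕ) (D : Set (Σ u v : V, G.Walk u v)) :
    Prop :=
  (∀ T ∈ D, T.2.2.IsPath ∧ T.2.2.length = ℓ ∧
    ∃ e ∈ M.edgeSet, T.2.2.edges[(ℓ - 1) / 2]? = some e) ∧
  ∀ e ∈ G.edgeSet, ∃! T, T ∈ D ∧ e ∈ T.2.2.edges

structure IsRootedPathDecomposition (H : SimpleGraph V) (k : ℕ) (Z : V → ℕ → V) : Prop where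
  apply_zero : ∀ v, Z v 0 = v
  adj : ∀ v, ∀ i < k, H.Adj (Z v i) (Z v (i + 1))
  injOn : ∀ v, Set.InjOn (Z v) (Set.Iic k)
  existsUnique : ∀ e ∈ H.edgeSet, ∃! v, ∃ i < k, e = s(Z v i, Z v (i + 1))
  eq_or_adj : ∀ u v, ∀ i ≤ k, ∀ j ≤ k, Z u i = Z v j → u = v ∨ H.Adj u v

def centeredPathFn (Z : V → ℕ → V) (k : ℕ) (u v : V) (j : ℕ) : V :=
  if j ≤ k then Z u (k - j) else Z v (j - (k + 1))

section centeredPathFn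

variable {Z : V → ℕ → V} {k : ℕ} {u v : V}

lemma exists_edge_centeredPathFn_iff {e : Sym2 V} :
    (∃ j < 2 * k + 1, e = s(centeredPathFn Z k u v j, centeredPathFn Z k u v (j + 1))) ↔
      (∃ i < k, e = s(Z u i, Z u (i + 1))) ∨ e = s(Z u 0, Z v 0) ∨
        ∃ i < k, e = s(Z v i, Z v (i + 1)) := by
  unfold centeredPathFn
  constructor
  · rintro ⟨j, hj, rfl⟩
    rcases lt_trichotomy j k with hjk | rfl | hjk
    · refine .inl ⟨k - j - 1, by omega, ?_⟩
      rw [if_pos hjk.le, if_pos (by omega : j + 1 ≤ k), Sym2.eq_swap,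
        show k - j - 1 + 1 = k - j by omega, show k - (j + 1) = k - j - 1 by omega]
    · simp
    · refine .inr <| .inr ⟨j - (k + 1), by omega, ?_⟩
      rw [if_neg (by omega), if_neg (by omega)]
      congr 3; omega
  · rintro (⟨i, hi, rfl⟩ | rfl | ⟨i, hi, rfl⟩)
    · refine ⟨k - i - 1, by omega, ?_⟩
      rw [if_pos (by omega), if_pos (by omega), Sym2.eq_swap]
      congr 3 <;> omega
    · exact ⟨k, by omega, by simp⟩
    · refine ⟨k + 1 + i, by omega, ?_⟩
      rw [if_neg (by omega), if_neg (by omega)]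
      congr 3 <;> omega

variable {H : SimpleGraph V} (hZ : IsRootedPathDecomposition H k Z)
include hZ

lemma IsRootedPathDecomposition.adj_centeredPathFn (hHG : H ≤ G) (huv : G.Adj u v) :
    ∀ j < 2 * k + 1, G.Adj (centeredPathFn Z k u v j) (centeredPathFn Z k u v (j + 1)) := by
  intro j hj
  have key := (exists_edge_centeredPathFn_iff (Z := Z) (u := u) (v := v)).1 ⟨j, hj, rfl⟩
  rw [← mem_edgeSet]
  rcases key with ⟨i, hi, he⟩ | he | ⟨i, hi, he⟩ <;> rw [he]
  · exact hHG (hZ.adj u i hi)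
  · simpa [hZ.apply_zero] using huv
  · exact hHG (hZ.adj v i hi)

lemma IsRootedPathDecomposition.injOn_centeredPathFn (hne : u ≠ v) (hnadj : ¬H.Adj u v) :
    Set.InjOn (centeredPathFn Z k u v) (Set.Iic (2 * k + 1)) := by
  have disjoint : ∀ i ≤ k, ∀ j ≤ k, Z u i ≠ Z v j := fun i hi j hj h =>
    (hZ.eq_or_adj u v i hi j hj h).elim hne hnadj
  intro i hi j hj h
  simp only [Set.mem_Iic] at hi hj
  unfold centeredPathFn at h
  split_ifs at h with hik hjk hjk
  · have := hZ.injOn u (Set.mem_Iic.2 (by omega)) (Set.mem_Iic.2 (by omega)) h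
    omega
  · exact absurd h (disjoint _ (by omega) _ (by omega))
  · exact absurd h.symm (disjoint _ (by omega) _ (by omega))
  · have := hZ.injOn v (Set.mem_Iic.2 (by omega)) (Set.mem_Iic.2 (by omega)) h
    omega

end centeredPathFn

lemma Subgraph.IsMatching.eq_of_mem_of_mem {M : G.Subgraph} (hM : M.IsMatching)
    {e e' : Sym2 V} (he : e ∈ M.edgeSet) (he' : e' ∈ M.edgeSet) {w : V} (hw : w ∈ e)
    (hw' : w ∈ e') : e = e' := by
  obtain ⟨x, rfl⟩ := Sym2.mem_iff_exists.1 hw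
  obtain ⟨x', rfl⟩ := Sym2.mem_iff_exists.1 hw'
  rw [hM.eq_of_adj_left (Subgraph.mem_edgeSet.1 he) (Subgraph.mem_edgeSet.1 he')]

section decomposition

variable {M : G.Subgraph} {k : ℕ} {Z : V → ℕ → V}

def centeredPath (hZ : IsRootedPathDecomposition (G.deleteEdges M.edgeSet) k Z) {u v : V}
    (huv : M.Adj u v) : Σ a b : V, G.Walk a b :=
  ⟨_, _, Walk.ofFn G (2 * k + 1) (centeredPathFn Z k u v)
    (hZ.adj_centeredPathFn (deleteEdges_le _) (M.adj_sub huv))⟩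

variable (hZ : IsRootedPathDecomposition (G.deleteEdges M.edgeSet) k Z) {u v : V}
  (huv : M.Adj u v)
include hZ

lemma isPath_centeredPath : (centeredPath hZ huv).2.2.IsPath :=
  Walk.isPath_ofFn <| hZ.injOn_centeredPathFn huv.ne fun h => (deleteEdges_adj.1 h).2 huv

lemma length_centeredPath : (centeredPath hZ huv).2.2.length = 2 * k + 1 :=
  Walk.length_ofFn

lemma getElem?_edges_centeredPath : (centeredPath hZ huv).2.2.edges[k]? = some s(u, v) := by
  rw [centeredPath, Walk.getElem?_edges_ofFn (by omega)]
  simp [centeredPathFn, hZ.apply_zero]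

lemma mem_edges_centeredPath {e : Sym2 V} : e ∈ (centeredPath hZ huv).2.2.edges ↔
    e = s(u, v) ∨ ∃ w ∈ s(u, v), ∃ i < k, e = s(Z w i, Z w (i + 1)) := by
  rw [centeredPath, Walk.mem_edges_ofFn, exists_edge_centeredPathFn_iff, hZ.apply_zero,
    hZ.apply_zero]
  simp only [Sym2.mem_iff, exists_eq_or_imp, exists_eq_left]
  exact or_left_comm

lemma mem_edges_centeredPath_congr {u' v' : V} {huv' : M.Adj u' v'} (h : s(u, v) = s(u', v'))
    {e : Sym2 V} :
    e ∈ (centeredPath hZ huv).2.2.edges ↔ e ∈ (centeredPath hZ huv').2.2.edges := by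
  rw [mem_edges_centeredPath, mem_edges_centeredPath, h]

lemma IsRootedPathDecomposition.sym2_eq_of_mem_edges_centeredPath (hM : M.IsMatching)
    {u' v' : V} {huv' : M.Adj u' v'} {e : Sym2 V} (he : e ∈ (centeredPath hZ huv).2.2.edges)
    (he' : e ∈ (centeredPath hZ huv').2.2.edges) : s(u, v) = s(u', v') := by
  have zig_notMem : ∀ w, ∀ i < k, s(Z w i, Z w (i + 1)) ∉ M.edgeSet := fun w i hi =>
    (deleteEdges_adj.1 (hZ.adj w i hi)).2
  rw [mem_edges_centeredPath] at he he'
  rcases he with rfl | ⟨w, hw, i, hi, rfl⟩ <;> rcases he' with he' | ⟨w', hw', i', hi', he'⟩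
  · exact he'
  · exact absurd (he' ▸ huv) (zig_notMem w' i' hi')
  · exact absurd (he' ▸ huv') (zig_notMem w i hi)
  · obtain rfl : w = w' :=
      (hZ.existsUnique _ (hZ.adj w i hi)).unique ⟨i, hi, rfl⟩ ⟨i', hi', he'⟩
    exact hM.eq_of_mem_of_mem huv huv' hw hw'

end decomposition

theorem IsRootedPathDecomposition.exists_isCenteredPathDecomposition {M : G.Subgraph} {k : ℕ}
    {Z : V → ℕ → V} (hZ : IsRootedPathDecomposition (G.deleteEdges M.edgeSet) k Z)
    (hM : M.IsPerfectMatching) : ∃ D, G.IsCenteredPathDecomposition M (2 * k + 1) D := by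
  let _ : LinearOrder V := WellOrderingRel.isWellOrder.linearOrder
  have exists_lt {u v} (h : M.Adj u v) :
      ∃ u' v', ∃ h' : M.Adj u' v', u' < v' ∧ s(u, v) = s(u', v') :=
    (lt_or_gt_of_ne h.ne).elim (fun hlt => ⟨u, v, h, hlt, rfl⟩)
      fun hgt => ⟨v, u, h.symm, hgt, Sym2.eq_swap⟩
  refine ⟨{T | ∃ u v, ∃ h : M.Adj u v, u < v ∧ T = centeredPath hZ h}, ?_, fun e he => ?_⟩
  · rintro _ ⟨u, v, h, -, rfl⟩
    refine ⟨isPath_centeredPath hZ h, length_centeredPath hZ h, s(u, v), h, ?_⟩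
    rw [show (2 * k + 1 - 1) / 2 = k by omega, getElem?_edges_centeredPath]
  obtain ⟨u, v, h, he_mem⟩ :
      ∃ u v, ∃ h : M.Adj u v, e ∈ (centeredPath hZ h).2.2.edges := by
    by_cases heM : e ∈ M.edgeSet
    · induction e using Sym2.ind with
      | _ a b => exact ⟨a, b, heM, (mem_edges_centeredPath hZ heM).2 (.inl rfl)⟩
    · obtain ⟨w, ⟨i, hi, rfl⟩, -⟩ :=
        hZ.existsUnique e (by simpa [deleteEdges_adj] using ⟨he, heM⟩)
      obtain ⟨x, hx, -⟩ := Subgraph.isPerfectMatching_iff.1 hM w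
      exact ⟨w, x, hx,
        (mem_edges_centeredPath hZ hx).2 (.inr ⟨w, Sym2.mem_mk_left _ _, i, hi, rfl⟩)⟩
  obtain ⟨u', v', h', hlt, heq⟩ := exists_lt h
  have he' := (mem_edges_centeredPath_congr hZ h (huv' := h') heq).1 he_mem
  refine ⟨centeredPath hZ h', ⟨⟨u', v', h', hlt, rfl⟩, he'⟩, ?_⟩
  rintro _ ⟨⟨u'', v'', h'', hlt', rfl⟩, he''⟩
  obtain ⟨rfl, rfl⟩ := Sym2.eq_and_eq_of_eq_of_lt
    (hZ.sym2_eq_of_mem_edges_centeredPath h'' hM.1 he'' he') hlt' hlt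
  rfl

theorem IsRootedPathDecomposition.comap {H : SimpleGraph V} {H' : SimpleGraph W} {k : ℕ}
    {Z : W → ℕ → W} (hZ : H'.IsRootedPathDecomposition k Z) (e : H ≃g H') :
    H.IsRootedPathDecomposition k fun v i => e.symm (Z (e v) i) where
  apply_zero v := by simp [hZ.apply_zero]
  adj v i hi := e.symm.map_adj_iff.2 (hZ.adj (e v) i hi)
  injOn v := e.symm.injective.comp_injOn (hZ.injOn (e v))
  existsUnique x hx := by
    induction x using Sym2.ind with | _ a b => ?_
    refine (e.toEquiv.existsUnique_congr fun v => ?_).2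
      (hZ.existsUnique s(e a, e b) (e.map_adj_iff.2 hx))
    simp_rw [← e.symm.injective.sym2_mk_eq_iff, RelIso.coe_fn_toEquiv, RelIso.symm_apply_apply]
  eq_or_adj u v i hi j hj h := by
    simpa [e.injective.eq_iff, e.map_adj_iff] using
      hZ.eq_or_adj (e u) (e v) i hi j hj (e.symm.injective h)

section componentwise

variable {H : SimpleGraph V} {k : ℕ}

def componentwise (Zc : ∀ c : H.ConnectedComponent, c.supp → ℕ → c.supp) (v : V) (i : ℕ) :
    V :=
  Zc (H.connectedComponentMk v) ⟨v, ConnectedComponent.connectedComponentMk_mem⟩ i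

variable {Zc : ∀ c : H.ConnectedComponent, c.supp → ℕ → c.supp}

lemma componentwise_eq (c : H.ConnectedComponent) (w : c.supp) (i : ℕ) :
    componentwise Zc w i = Zc c w i := by
  obtain ⟨w, rfl⟩ := w
  rfl

lemma connectedComponentMk_componentwise (v : V) (i : ℕ) :
    H.connectedComponentMk (componentwise Zc v i) = H.connectedComponentMk v :=
  (Zc _ _ i).2

lemma sym2_eq_componentwise_iff {c : H.ConnectedComponent} (p q w : c.supp) (i j : ℕ) :
    s(↑p, ↑q) = s(componentwise Zc w i, componentwise Zc w j) ↔
      s(p, q) = s(Zc c w i, Zc c w j) := by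
  rw [componentwise_eq, componentwise_eq, Subtype.val_injective.sym2_mk_eq_iff]

theorem isRootedPathDecomposition_componentwise
    (hZ : ∀ c, (H.induce c.supp).IsRootedPathDecomposition k (Zc c)) :
    H.IsRootedPathDecomposition k (componentwise Zc) where
  apply_zero v := by rw [componentwise, (hZ _).apply_zero]
  adj v i hi := by simpa [componentwise] using (hZ _).adj _ i hi
  injOn v := Subtype.val_injective.comp_injOn ((hZ _).injOn _)
  existsUnique x hx := by
    induction x using Sym2.ind with | _ a b => ?_
    set c := H.connectedComponentMk a
    have hb : b ∈ c.supp := (c.mem_supp_congr_adj hx).1 rfl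
    obtain ⟨w, ⟨i, hi, hw⟩, huniq⟩ :=
      (hZ c).existsUnique s(⟨a, rfl⟩, ⟨b, hb⟩) (by simpa using hx)
    refine ⟨w, ⟨i, hi, (sym2_eq_componentwise_iff _ _ _ _ _).2 hw⟩, ?_⟩
    rintro v ⟨j, hj, hv⟩
    have hvc : v ∈ c.supp := by
      have ha : a ∈ s(componentwise Zc v j, componentwise Zc v (j + 1)) :=
        hv ▸ Sym2.mem_mk_left _ _
      rcases Sym2.mem_iff.1 ha with h | h <;>
        exact (h ▸ connectedComponentMk_componentwise v _).symm
    exact congrArg Subtype.val <| huniq ⟨v, hvc⟩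
      ⟨j, hj, (sym2_eq_componentwise_iff (Zc := Zc) ⟨a, rfl⟩ ⟨b, hb⟩ _ _ _).1 hv⟩
  eq_or_adj u v i hi j hj h := by
    set c := H.connectedComponentMk u
    have hvc : v ∈ c.supp := by
      rw [ConnectedComponent.mem_supp_iff, ← connectedComponentMk_componentwise (Zc := Zc) v j,
        ← h, connectedComponentMk_componentwise]
    rw [componentwise_eq c ⟨u, rfl⟩, componentwise_eq c ⟨v, hvc⟩] at h
    simpa [Subtype.ext_iff] using (hZ c).eq_or_adj _ _ i hi j hj (Subtype.val_injective h)

end componentwise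

lemma Iso.ncard_neighborSet {G' : SimpleGraph W} (e : G ≃g G') (v : V) :
    (G'.neighborSet (e v)).ncard = (G.neighborSet v).ncard := by
  simp_rw [← Nat.card_coe_set_eq]
  exact (Nat.card_congr (e.mapNeighborSet v)).symm

lemma ncard_neighborSet_induce_connectedComponent (c : G.ConnectedComponent) (v : c.supp) :
    ((G.induce c.supp).neighborSet v).ncard = (G.neighborSet v).ncard := by
  rw [neighborSet_induce, Set.ncard_preimage_of_injective_subset_range Subtype.val_injective]
  exact fun w hw => ⟨⟨w, (c.mem_supp_congr_adj hw).1 v.2⟩, rfl⟩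

lemma ncard_neighborSet_deleteEdges_of_isPerfectMatching {M : G.Subgraph}
    (hM : M.IsPerfectMatching) (v : V) :
    ((G.deleteEdges M.edgeSet).neighborSet v).ncard = (G.neighborSet v).ncard - 1 := by
  obtain ⟨w, hw, huniq⟩ := Subgraph.isPerfectMatching_iff.1 hM v
  have : (G.deleteEdges M.edgeSet).neighborSet v = G.neighborSet v \ {w} := by
    ext x
    simp only [mem_neighborSet, deleteEdges_adj, Subgraph.mem_edgeSet, Set.mem_sdiff,
      Set.mem_singleton_iff]
    exact and_congr_right fun _ => not_congr ⟨huniq x, fun h => h ▸ hw⟩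
  rw [this, Set.ncard_sdiff_singleton_of_mem (show w ∈ G.neighborSet v from M.adj_sub hw)]

end SimpleGraph

def zigzag (k j : ℕ) : ℕ := if j % 2 = 0 then j / 2 else k - j / 2

lemma zigzag_zero (k : ℕ) : zigzag k 0 = 0 := rfl

lemma zigzag_le {k j : ℕ} (hj : j ≤ k) : zigzag k j ≤ k := by
  unfold zigzag; split_ifs <;> omega

lemma zigzag_injOn (k : ℕ) : Set.InjOn (zigzag k) (Set.Iic k) := by
  intro i hi j hj h
  simp only [Set.mem_Iic] at hi hj
  unfold zigzag at h; split_ifs at h <;> omega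

lemma zigzag_pair {k i : ℕ} (hi : i < k) :
    (zigzag k i = (i + 1) / 2 ∧ zigzag k (i + 1) = (i + 1) / 2 + (k - i)) ∨
      (zigzag k i = (i + 1) / 2 + (k - i) ∧ zigzag k (i + 1) = (i + 1) / 2) := by
  unfold zigzag; split_ifs <;> omega

section cyclePower

variable {m k : ℕ}

lemma ZMod.natCast_injOn_Iic (hm : m = 0 ∨ 2 * k < m) :
    Set.InjOn (Nat.cast : ℕ → ZMod m) (Set.Iic (2 * k)) := by
  intro a ha b hb h
  simp only [Set.mem_Iic] at ha hb
  rw [ZMod.natCast_eq_natCast_iff'] at h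
  rcases hm with rfl | hm
  · simpa using h
  · rwa [Nat.mod_eq_of_lt (by omega), Nat.mod_eq_of_lt (by omega)] at h

lemma cyclePower_adj_add_natCast (hm : m = 0 ∨ 2 * k < m) (x : ZMod m) {a b : ℕ} (ha : a ≤ k)
    (hb : b ≤ k) (hab : a ≠ b) : (cyclePower m k).Adj (x + a) (x + b) := by
  refine ⟨fun h => hab (ZMod.natCast_injOn_Iic hm (by simp; omega) (by simp; omega)
    (add_left_cancel h)), (a : ℤ) - b, by omega, by push_cast; ring⟩

lemma eq_or_cyclePower_adj_of_add_natCast_eq {x y : ZMod m} {a b : ℕ} (ha : a ≤ k)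
    (hb : b ≤ k) (h : x + a = y + b) : x = y ∨ (cyclePower m k).Adj x y := by
  refine or_iff_not_imp_left.2 fun hxy => ⟨hxy, (b : ℤ) - a, by omega, ?_⟩
  push_cast
  linear_combination h

lemma exists_eq_sym2_add_natCast_of_cyclePower_adj {x y : ZMod m} (h : (cyclePower m k).Adj x y) :
    ∃ (z : ZMod m) (d : ℕ), 0 < d ∧ d ≤ k ∧ s(x, y) = s(z, z + d) := by
  obtain ⟨hxy, r, hr, hxyr⟩ := h
  have hr0 : r ≠ 0 := by rintro rfl; exact hxy (sub_eq_zero.1 (by simpa using hxyr))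
  rcases Int.natAbs_eq r with hr' | hr'
  · refine ⟨y, r.natAbs, by omega, hr, ?_⟩
    rw [hr', Int.cast_natCast] at hxyr
    rw [← hxyr, add_sub_cancel, Sym2.eq_swap]
  · refine ⟨x, r.natAbs, by omega, hr, ?_⟩
    rw [hr', Int.cast_neg, Int.cast_natCast] at hxyr
    rw [← neg_sub, neg_inj] at hxyr
    rw [← hxyr, add_sub_cancel]

lemma eq_and_eq_of_sym2_add_natCast_eq (hm : m = 0 ∨ 2 * k < m) {x y : ZMod m} {d e : ℕ}
    (hd : 0 < d) (hdk : d ≤ k) (he : 0 < e) (hek : e ≤ k) (h : s(x, x + d) = s(y, y + e)) :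
    x = y ∧ d = e := by
  rcases Sym2.eq_iff.1 h with ⟨rfl, h⟩ | ⟨h1, h2⟩
  · exact ⟨rfl, ZMod.natCast_injOn_Iic hm (by simp; omega) (by simp; omega)
      (add_left_cancel h)⟩
  · have : ((d + e : ℕ) : ZMod m) = (0 : ℕ) := by
      push_cast
      linear_combination h2 - h1
    exact absurd (ZMod.natCast_injOn_Iic hm (by simp; omega) (by simp) this) (by omega)

lemma sym2_zigzag_eq {x : ZMod m} {i : ℕ} (hi : i < k) :
    s(x + (zigzag k i : ZMod m), x + (zigzag k (i + 1) : ZMod m)) =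
      s(x + ((i + 1) / 2 : ℕ), x + ((i + 1) / 2 : ℕ) + (k - i : ℕ)) := by
  rcases zigzag_pair hi with ⟨h1, h2⟩ | ⟨h1, h2⟩ <;>
    rw [h1, h2, Nat.cast_add, ← add_assoc]
  exact Sym2.eq_swap

theorem isRootedPathDecomposition_cyclePower (hm : m = 0 ∨ 2 * k < m) :
    (cyclePower m k).IsRootedPathDecomposition k fun x j => x + (zigzag k j : ZMod m) where
  apply_zero x := by simp [zigzag_zero]
  adj x i hi := cyclePower_adj_add_natCast hm x (zigzag_le hi.le) (zigzag_le hi)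
    fun h => by have := zigzag_injOn k (by simp; omega) (by simp; omega) h; omega
  injOn x i hi j hj h := zigzag_injOn k hi hj
    (ZMod.natCast_injOn_Iic hm (by simp; have := zigzag_le hi; omega)
      (by simp; have := zigzag_le hj; omega) (add_left_cancel h))
  existsUnique e he := by
    induction e using Sym2.ind with | _ x y => ?_
    obtain ⟨z, d, hd, hdk, hxy⟩ := exists_eq_sym2_add_natCast_of_cyclePower_adj he
    refine ⟨z - ((k - d + 1) / 2 : ℕ), ⟨k - d, by omega, ?_⟩, ?_⟩
    · rw [hxy, sym2_zigzag_eq (by omega), sub_add_cancel, show k - (k - d) = d by omega]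
    · rintro w ⟨i, hi, hw⟩
      rw [hxy, sym2_zigzag_eq hi] at hw
      obtain ⟨hz, hdi⟩ := eq_and_eq_of_sym2_add_natCast_eq hm hd hdk (by omega) (by omega) hw
      rw [hz, show k - d = i by omega, add_sub_cancel_right]
  eq_or_adj x y i hi j hj h :=
    eq_or_cyclePower_adj_of_add_natCast_eq (zigzag_le hi) (zigzag_le hj) h

lemma eq_zero_or_lt_of_ncard_neighborSet_cyclePower (x : ZMod m)
    (h : ((cyclePower m k).neighborSet x).ncard = 2 * k) : m = 0 ∨ 2 * k < m := by
  refine or_iff_not_imp_left.2 fun hm => ?_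
  have : NeZero m := ⟨hm⟩
  have hx : x ∉ (cyclePower m k).neighborSet x := (cyclePower m k).loopless.irrefl x
  have := Set.ncard_le_card (insert x ((cyclePower m k).neighborSet x))
  rw [Set.ncard_insert_of_notMem hx, h, Nat.card_zmod] at this
  omega

end cyclePower

theorem stmt_7_general {V : Type*}
    (ℓ : ℕ) (hodd : Odd ℓ)
    (G : SimpleGraph V) (hreg : ∀ v : V, (G.neighborSet v).ncard = ℓ)
    (M : G.Subgraph) (hM : M.IsPerfectMatching)
    (hcomp : ∀ c : (G.deleteEdges M.edgeSet).ConnectedComponent,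
      ∃ m : ℕ, Nonempty (((G.deleteEdges M.edgeSet).induce c.supp) ≃g
        cyclePower m ((ℓ - 1) / 2))) :
    ∃ D : Set (Σ u : V, Σ v : V, G.Walk u v),
      (∀ T ∈ D, T.2.2.IsPath ∧ T.2.2.length = ℓ ∧
        ∃ e ∈ M.edgeSet, T.2.2.edges[(ℓ - 1) / 2]? = some e) ∧
      ∀ e ∈ G.edgeSet, ∃! T, T ∈ D ∧ e ∈ T.2.2.edges := by
  obtain ⟨k, rfl⟩ := hodd
  simp only [show (2 * k + 1 - 1) / 2 = k by omega] at hcomp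
  set H := G.deleteEdges M.edgeSet
  have hdeg (v : V) : (H.neighborSet v).ncard = 2 * k := by
    rw [ncard_neighborSet_deleteEdges_of_isPerfectMatching hM, hreg, Nat.add_sub_cancel]
  have hZ (c : H.ConnectedComponent) : ∃ Z, (H.induce c.supp).IsRootedPathDecomposition k Z := by
    obtain ⟨m, ⟨φ⟩⟩ := hcomp c
    obtain ⟨v, hv⟩ := c.nonempty_supp
    have hm := eq_zero_or_lt_of_ncard_neighborSet_cyclePower (φ ⟨v, hv⟩) <| by
      rw [φ.ncard_neighborSet, ncard_neighborSet_induce_connectedComponent, hdeg]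
    exact ⟨_, (isRootedPathDecomposition_cyclePower hm).comap φ⟩
  choose Z hZ using hZ
  exact (isRootedPathDecomposition_componentwise hZ).exists_isCenteredPathDecomposition hM

/-- Let `ℓ` be odd and let `G` be an `ℓ`-regular graph with a perfect matching
`M`. If each connected component of `G` minus the edges of `M` is isomorphic to the
`((ℓ-1)/2)`-th power of a cycle, then `G` admits an `M`-centered `P_ℓ`-decomposition:
a decomposition into paths of `ℓ` edges whose middle edge lies in `M`. -/
theorem stmt_7 {V : Type*} [Fintype V]
    (ℓ : ℕ) (hodd : Odd ℓ)
    (G : SimpleGraph V) (hreg : ∀ v : V, (G.neighborSet v).ncard = ℓ)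
    (M : G.Subgraph) (hM : M.IsPerfectMatching)
    (hcomp : ∀ c : (G.deleteEdges M.edgeSet).ConnectedComponent,
      ∃ m : ℕ, Nonempty (((G.deleteEdges M.edgeSet).induce c.supp) ≃g
        cyclePower m ((ℓ - 1) / 2))) :
    ∃ D : Set (Σ u : V, Σ v : V, G.Walk u v),
      (∀ T ∈ D, T.2.2.IsPath ∧ T.2.2.length = ℓ ∧
        ∃ e ∈ M.edgeSet, T.2.2.edges[(ℓ - 1) / 2]? = some e) ∧
      ∀ e ∈ G.edgeSet, ∃! T, T ∈ D ∧ e ∈ T.2.2.edges :=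
  stmt_7_general ℓ hodd G hreg M hM hcomp
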